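/- Let G=(V,E) be a finite connected weighted graph with symmetric positive edge weights ω and positive vertex measure μ, and let h, f : V → ℝ satisfy h ≤ 0 and f > 0. Assume α ≥ p > 1. Then there exist a constant λ ∈ ℝ and a function u : V → ℝ with u > 0 at every vertex such that -Δ_p u + h·u^{p-1} = λ·f·u^{α-1} at every vertex of V. -/

import Mathlib

open Finset Filter

section AuxAnalysis

/-- MVT bound: `a^q - b^q ≤ q a^{q-1} (a-b)` for `0 ≤ b ≤ a`, `1 ≤ q`. -/
lemma aux_rpow_sub_le {q : ℝ} (hq : 1 ≤ q) {a b : ℝ} (hb : 0 ≤ b) (hba : b ≤ a) :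
    a ^ q - b ^ q ≤ q * a ^ (q - 1) * (a - b) := by
  rcases eq_or_lt_of_le hba with rfl | hlt
  · simp
  have ha : (0:ℝ) ≤ a := hb.trans hba
  have hcont : ∀ x : ℝ, ContinuousAt (fun y : ℝ => y ^ q) x := fun x =>
    (Real.hasDerivAt_rpow_const (Or.inr hq)).continuousAt
  obtain ⟨c, hc, hceq⟩ := exists_hasDerivAt_eq_slope (fun y : ℝ => y ^ q)
    (fun y => q * y ^ (q - 1)) hlt
    (Continuous.continuousOn (continuous_iff_continuousAt.2 hcont))
    (fun x _ => Real.hasDerivAt_rpow_const (Or.inr hq))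
  have hc0 : 0 ≤ c := le_trans hb hc.1.le
  have hcle : c ^ (q - 1) ≤ a ^ (q - 1) :=
    Real.rpow_le_rpow hc0 hc.2.le (by linarith)
  have hslope : a ^ q - b ^ q = q * c ^ (q - 1) * (a - b) := by
    rw [hceq, div_mul_cancel₀ _ (by linarith : a - b ≠ 0)]
  rw [hslope]
  have : q * c ^ (q - 1) ≤ q * a ^ (q - 1) :=
    mul_le_mul_of_nonneg_left hcle (by linarith)
  exact mul_le_mul_of_nonneg_right this (by linarith)

lemma aux_abs_rpow_sub_abs_rpow {q : ℝ} (hq : 1 ≤ q) (x y : ℝ) :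
    |(|x| ^ q - |y| ^ q)| ≤ q * (max |x| |y|) ^ (q - 1) * |x - y| := by
  wlog hxy : |y| ≤ |x| generalizing x y
  · have := this y x (le_of_not_ge hxy)
    rwa [abs_sub_comm, abs_sub_comm y x, max_comm] at this
  have h1 : |y| ^ q ≤ |x| ^ q := Real.rpow_le_rpow (abs_nonneg y) hxy (by linarith)
  rw [abs_of_nonneg (by linarith), max_eq_left hxy]
  calc |x| ^ q - |y| ^ q ≤ q * |x| ^ (q - 1) * (|x| - |y|) :=
        aux_rpow_sub_le hq (abs_nonneg y) hxy
    _ ≤ q * |x| ^ (q - 1) * |x - y| := by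
        refine mul_le_mul_of_nonneg_left ?_ ?_
        · exact abs_sub_abs_le_abs_sub x y
        · positivity

/-- Strict differentiability of `|t|^q` at `0` for `q > 1`. -/
lemma aux_hasStrictDerivAt_abs_rpow_zero {q : ℝ} (hq : 1 < q) :
    HasStrictDerivAt (fun s : ℝ => |s| ^ q) 0 (0:ℝ) := by
  rw [hasStrictDerivAt_iff_hasStrictFDerivAt]
  rw [hasStrictFDerivAt_iff_isLittleO]
  simp only [ContinuousLinearMap.toSpanSingleton_apply, ContinuousLinearMap.smulRight_apply, ContinuousLinearMap.one_apply, smul_zero,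
    sub_zero, smul_eq_mul, mul_zero]
  have htend : Tendsto (fun p : ℝ × ℝ => q * (max |p.1| |p.2|) ^ (q - 1)) (nhds ((0:ℝ),(0:ℝ)))
      (nhds 0) := by
    have h1 : Tendsto (fun p : ℝ × ℝ => max |p.1| |p.2|) (nhds ((0:ℝ),(0:ℝ))) (nhds 0) := by
      have := ((continuous_fst.abs.max continuous_snd.abs)).tendsto ((0:ℝ),(0:ℝ))
      simpa using this
    have h2 : Tendsto (fun s : ℝ => q * s ^ (q - 1)) (nhds 0) (nhds 0) := by
      have hc : ContinuousAt (fun s : ℝ => s ^ (q - 1)) 0 :=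
        Real.continuousAt_rpow_const 0 (q-1) (Or.inr (by linarith))
      have : Tendsto (fun s : ℝ => s ^ (q - 1)) (nhds 0) (nhds ((0:ℝ) ^ (q-1))) := hc.tendsto
      rw [Real.zero_rpow (by linarith : q - 1 ≠ 0)] at this
      simpa using this.const_mul q
    exact h2.comp h1
  refine Asymptotics.isLittleO_iff.2 fun c hc => ?_
  filter_upwards [htend.eventually_lt_const hc] with p hp
  rw [Real.norm_eq_abs, Real.norm_eq_abs]
  exact le_trans (aux_abs_rpow_sub_abs_rpow hq.le p.1 p.2)
    (mul_le_mul_of_nonneg_right hp.le (abs_nonneg _))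

/-- Strict differentiability of `|t|^q` everywhere, for `q > 1`. -/
lemma aux_hasStrictDerivAt_abs_rpow {q : ℝ} (hq : 1 < q) (t : ℝ) :
    HasStrictDerivAt (fun s : ℝ => |s| ^ q) (q * |t| ^ (q - 2) * t) t := by
  rcases lt_trichotomy t 0 with ht | rfl | ht
  · have hne : -t ≠ 0 := by linarith
    have h1 : HasStrictDerivAt (fun s : ℝ => (-s) ^ q) (q * (-t) ^ (q - 1) * (-1)) t := by
      exact (Real.hasStrictDerivAt_rpow_const_of_ne hne q).comp t ((hasStrictDerivAt_id t).neg)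
    have h2 : (fun s : ℝ => |s| ^ q) =ᶠ[nhds t] fun s : ℝ => (-s) ^ q := by
      filter_upwards [eventually_lt_nhds ht] with s hs
      rw [abs_of_neg hs]
    have h3 : q * (-t) ^ (q - 1) * (-1) = q * |t| ^ (q - 2) * t := by
      rw [abs_of_neg ht]
      have : (-t) ^ (q - 1) = (-t) ^ (q - 2) * (-t) := by
        rw [← Real.rpow_add_one hne]; ring_nf
      rw [this]; ring
    exact h3 ▸ h1.congr_of_eventuallyEq h2.symm
  · simpa using aux_hasStrictDerivAt_abs_rpow_zero hq
  · have h1 := Real.hasStrictDerivAt_rpow_const_of_ne (ne_of_gt ht) q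
    have h2 : (fun s : ℝ => |s| ^ q) =ᶠ[nhds t] fun s : ℝ => s ^ q := by
      filter_upwards [eventually_gt_nhds ht] with s hs
      rw [abs_of_pos hs]
    have h3 : q * t ^ (q - 1) = q * |t| ^ (q - 2) * t := by
      rw [abs_of_pos ht]
      have h4 : t ^ (q - 1) = t ^ (q - 2) * t := by
        rw [← Real.rpow_add_one (ne_of_gt ht)]; ring_nf
      rw [h4]; ring
    exact h3 ▸ h1.congr_of_eventuallyEq h2.symm

lemma aux_walk {V : Type*} {G : SimpleGraph V} {Z : Set V}
    (hZ : ∀ i, i ∈ Z → ∀ j, G.Adj i j → j ∈ Z) {i j : V} (wk : G.Walk i j) :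
    i ∈ Z → j ∈ Z := by
  induction wk with
  | nil => exact id
  | cons h p ih => exact fun hi => ih (hZ _ hi _ h)

/-- Strict Fréchet derivative of `u ↦ ∑ i, c i * |u i| ^ q`. -/
lemma aux_hasStrictFDerivAt_diag {V : Type*} [Fintype V] [DecidableEq V]
    (c : V → ℝ) {q : ℝ} (hq : 1 < q) (v : V → ℝ) :
    HasStrictFDerivAt (fun u : V → ℝ => ∑ i, c i * |u i| ^ q)
      (∑ i, (c i * (q * |v i| ^ (q - 2) * v i)) •
        (ContinuousLinearMap.proj i : (V → ℝ) →L[ℝ] ℝ)) v := by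
  refine HasStrictFDerivAt.fun_sum fun i _ => ?_
  have hproj : HasStrictFDerivAt (fun u : V → ℝ => u i)
      (ContinuousLinearMap.proj i : (V → ℝ) →L[ℝ] ℝ) v :=
    (ContinuousLinearMap.proj (R := ℝ) (φ := fun _ : V => ℝ) i).hasStrictFDerivAt
  have h1 : HasStrictFDerivAt (fun u : V → ℝ => |u i| ^ q)
      ((q * |v i| ^ (q - 2) * v i) • (ContinuousLinearMap.proj i : (V → ℝ) →L[ℝ] ℝ)) v :=
    by have := (aux_hasStrictDerivAt_abs_rpow hq (v i)).comp_hasStrictFDerivAt v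
        (hproj : HasStrictFDerivAt (fun u : V → ℝ => u i) _ v)
       exact this
  simpa [smul_smul] using h1.const_mul (c i)

/-- Strict Fréchet derivative of `u ↦ ∑ i, ∑ j ∈ N i, w i j * |u i - u j| ^ q`. -/
lemma aux_hasStrictFDerivAt_edge {V : Type*} [Fintype V] [DecidableEq V]
    (N : V → Finset V) (w : V → V → ℝ) {q : ℝ} (hq : 1 < q) (v : V → ℝ) :
    HasStrictFDerivAt (fun u : V → ℝ => ∑ i, ∑ j ∈ N i, w i j * |u i - u j| ^ q)
      (∑ i, ∑ j ∈ N i, (w i j * (q * |v i - v j| ^ (q - 2) * (v i - v j))) •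
        ((ContinuousLinearMap.proj i : (V → ℝ) →L[ℝ] ℝ) - ContinuousLinearMap.proj j)) v := by
  refine HasStrictFDerivAt.fun_sum fun i _ => HasStrictFDerivAt.fun_sum fun j _ => ?_
  have hsub : HasStrictFDerivAt (fun u : V → ℝ => u i - u j)
      ((ContinuousLinearMap.proj i : (V → ℝ) →L[ℝ] ℝ) - ContinuousLinearMap.proj j) v :=
    HasStrictFDerivAt.sub
      ((ContinuousLinearMap.proj (R := ℝ) (φ := fun _ : V => ℝ) i).hasStrictFDerivAt
        : HasStrictFDerivAt (fun u : V → ℝ => u i) _ v)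
      ((ContinuousLinearMap.proj (R := ℝ) (φ := fun _ : V => ℝ) j).hasStrictFDerivAt
        : HasStrictFDerivAt (fun u : V → ℝ => u j) _ v)
  have h1 := (aux_hasStrictDerivAt_abs_rpow hq (v i - v j)).comp_hasStrictFDerivAt v hsub
  simpa [smul_smul] using h1.const_mul (w i j)

lemma aux_eval_diag {V : Type*} [Fintype V] [DecidableEq V] (c : V → ℝ) (k : V) :
    ((∑ i, c i • (ContinuousLinearMap.proj i : (V → ℝ) →L[ℝ] ℝ) : (V → ℝ) →L[ℝ] ℝ))
      (Pi.single k 1) = c k := by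
  rw [ContinuousLinearMap.sum_apply]
  simp only [ContinuousLinearMap.smul_apply, ContinuousLinearMap.proj_apply, Pi.single_apply,
    smul_eq_mul, mul_ite, mul_one, mul_zero]
  simp

lemma aux_eval_edge {V : Type*} [Fintype V] [DecidableEq V] (N : V → Finset V)
    (hNsymm : ∀ i j, j ∈ N i ↔ i ∈ N j) (d : V → V → ℝ) (hd : ∀ i j, d i j = - d j i) (k : V) :
    ((∑ i, ∑ j ∈ N i, d i j • ((ContinuousLinearMap.proj i : (V → ℝ) →L[ℝ] ℝ)
      - ContinuousLinearMap.proj j) : (V → ℝ) →L[ℝ] ℝ)) (Pi.single k 1)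
      = 2 * ∑ j ∈ N k, d k j := by
  rw [ContinuousLinearMap.sum_apply]
  simp only [ContinuousLinearMap.sum_apply, ContinuousLinearMap.smul_apply,
    ContinuousLinearMap.sub_apply, ContinuousLinearMap.proj_apply, smul_eq_mul, Pi.single_apply,
    mul_sub, mul_ite, mul_one, mul_zero]
  rw [Finset.sum_congr rfl (fun i _ => Finset.sum_sub_distrib _ _), Finset.sum_sub_distrib]
  have h1 : ∑ i, ∑ j ∈ N i, (if i = k then d i j else 0) = ∑ j ∈ N k, d k j := by
    rw [Finset.sum_eq_single k]
    · simp
    · intro i _ hik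
      exact Finset.sum_eq_zero fun j _ => by simp [hik]
    · simp
  have h2 : ∑ i, ∑ j ∈ N i, (if j = k then d i j else 0) = - ∑ j ∈ N k, d k j := by
    have e1 : ∀ i, ∑ j ∈ N i, (if j = k then d i j else 0) = if k ∈ N i then d i k else 0 :=
      fun i => Finset.sum_ite_eq' (N i) k _
    rw [Finset.sum_congr rfl fun i _ => e1 i,
      Finset.sum_congr rfl fun i _ => if_congr (hNsymm i k) rfl rfl,
      Fintype.sum_ite_mem (N k) fun i => d i k]
    rw [← Finset.sum_neg_distrib]
    exact Finset.sum_congr rfl fun i _ => by rw [hd i k]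
  rw [h1, h2]
  ring

end AuxAnalysis

/-- The `p`-th discrete graph Laplacian:
`Δ_p u i = (1/μ_i) ∑_{j∼i} ω_{ij} |u_j - u_i|^{p-2} (u_j - u_i)`. -/
noncomputable def pLap {V : Type*} [Fintype V] (G : SimpleGraph V) [DecidableRel G.Adj]
    (w : V → V → ℝ) (m : V → ℝ) (p : ℝ) (u : V → ℝ) (i : V) : ℝ :=
  (1 / m i) * ∑ j ∈ G.neighborFinset i, w i j * |u j - u i| ^ (p - 2) * (u j - u i)

/-- There exist `λ ∈ ℝ` and a positive solution `u > 0` of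
`-Δ_p u + h u^{p-1} = λ f u^{α-1}` on a finite connected weighted graph,
given `h ≤ 0`, `f > 0` and `α ≥ p > 1` (Ge's theorem). -/
theorem pth_yamabe_alpha_ge_p
    {V : Type*} [Fintype V] [Nonempty V]
    (G : SimpleGraph V) [DecidableRel G.Adj] (hconn : G.Connected)
    (w : V → V → ℝ) (hwsymm : ∀ i j, w i j = w j i)
    (hwpos : ∀ i j, G.Adj i j → 0 < w i j)
    (m : V → ℝ) (hm : ∀ i, 0 < m i)
    (h f : V → ℝ) (hh : ∀ i, h i ≤ 0) (hf : ∀ i, 0 < f i)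
    (α p : ℝ) (hp : 1 < p) (hαp : p ≤ α) :
    ∃ (lam : ℝ) (u : V → ℝ), (∀ i, 0 < u i) ∧
      ∀ i, -pLap G w m p u i + h i * u i ^ (p - 1)
        = lam * f i * u i ^ (α - 1) := by
  classical
  have hα : 1 < α := lt_of_lt_of_le hp hαp
  have hα0 : α ≠ 0 := by linarith
  -- the constraint functional and the energy functional
  set Φ : (V → ℝ) → ℝ := fun u => ∑ i, m i * f i * |u i| ^ α with hΦdef
  set J : (V → ℝ) → ℝ := fun u =>
    (1/2) * (∑ i, ∑ j ∈ G.neighborFinset i, w i j * |u i - u j| ^ p)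
      + ∑ i, m i * h i * |u i| ^ p with hJdef
  set S : Set (V → ℝ) := {u | Φ u = 1} with hSdef
  -- Φ and J are continuous
  have habs_cont : ∀ (q : ℝ), 1 < q → ∀ (g : (V → ℝ) → ℝ), Continuous g →
      Continuous (fun u : V → ℝ => |g u| ^ q) := by
    intro q hq g hg
    exact (hg.abs).rpow_const fun u => Or.inr (by linarith)
  have hΦcont : Continuous Φ := by
    refine continuous_finset_sum _ fun i _ => Continuous.mul continuous_const ?_
    exact habs_cont α hα _ (continuous_apply i)
  have hJcont : Continuous J := by
    refine Continuous.add (Continuous.mul continuous_const ?_)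
      (continuous_finset_sum _ fun i _ => Continuous.mul continuous_const
        (habs_cont p hp _ (continuous_apply i)))
    refine continuous_finset_sum _ fun i _ => continuous_finset_sum _ fun j _ =>
      Continuous.mul continuous_const (habs_cont p hp _ ?_)
    exact (continuous_apply i).sub (continuous_apply j)
  -- S is nonempty
  have hmf_pos : ∀ i, 0 < m i * f i := fun i => mul_pos (hm i) (hf i)
  have hT : 0 < ∑ i, m i * f i := Finset.sum_pos (fun i _ => hmf_pos i) univ_nonempty
  have hSne : S.Nonempty := by
    refine ⟨fun _ => (∑ i, m i * f i) ^ (-α⁻¹), ?_⟩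
    have hc : (0:ℝ) < (∑ i, m i * f i) ^ (-α⁻¹) := Real.rpow_pos_of_pos hT _
    show (∑ i, m i * f i * |(∑ i, m i * f i) ^ (-α⁻¹)| ^ α) = 1
    rw [← Finset.sum_mul]
    rw [abs_of_pos hc, ← Real.rpow_mul hT.le]
    rw [show -α⁻¹ * α = -1 by field_simp]
    rw [Real.rpow_neg_one]
    exact mul_inv_cancel₀ hT.ne'
  -- S is compact
  -- S is compact
  have hScomp : IsCompact S := by
    have hclosed : IsClosed S := isClosed_eq hΦcont continuous_const
    refine Metric.isCompact_of_isClosed_isBounded hclosed ?_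
    set R : ℝ := Finset.univ.sup' univ_nonempty (fun i => ((m i * f i)⁻¹) ^ α⁻¹) with hRdef
    have hR0 : 0 ≤ R := by
      obtain ⟨i⟩ := (inferInstance : Nonempty V)
      rw [hRdef]
      exact le_trans (Real.rpow_nonneg (inv_nonneg.2 (hmf_pos i).le) _)
        (Finset.le_sup' (fun i => ((m i * f i)⁻¹) ^ α⁻¹) (mem_univ i))
    refine (Metric.isBounded_closedBall (x := (0 : V → ℝ)) (r := R)).subset ?_
    intro u hu
    rw [Metric.mem_closedBall, dist_zero_right]
    rw [pi_norm_le_iff_of_nonneg hR0]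
    intro i
    have h1 : m i * f i * |u i| ^ α ≤ 1 := by
      have hu' : ∑ j, m j * f j * |u j| ^ α = 1 := hu
      rw [← hu']
      exact Finset.single_le_sum (f := fun j => m j * f j * |u j| ^ α)
        (fun j _ => mul_nonneg (hmf_pos j).le (Real.rpow_nonneg (abs_nonneg _) _)) (mem_univ i)
    have h2 : |u i| ^ α ≤ (m i * f i)⁻¹ := by
      rw [← one_div]
      rw [le_div_iff₀ (hmf_pos i)]
      linarith [h1]
    have h3 : (|u i| ^ α) ^ α⁻¹ ≤ ((m i * f i)⁻¹) ^ α⁻¹ :=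
      Real.rpow_le_rpow (Real.rpow_nonneg (abs_nonneg _) _) h2 (by positivity)
    rw [Real.rpow_rpow_inv (abs_nonneg _) hα0] at h3
    rw [hRdef]
    exact le_trans h3 (Finset.le_sup' (fun i => ((m i * f i)⁻¹) ^ α⁻¹) (mem_univ i))
  -- a minimizer exists; replace it by its absolute value
  obtain ⟨u₁, hu₁S, hu₁min⟩ := hScomp.exists_isMinOn hSne hJcont.continuousOn
  set v : V → ℝ := fun i => |u₁ i| with hvdef
  have hvnn : ∀ i, 0 ≤ v i := fun i => abs_nonneg _
  have hvS : Φ v = 1 := by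
    have hu₁S' : Φ u₁ = 1 := hu₁S
    simpa only [hΦdef, hvdef, abs_abs] using hu₁S'
  have hvmin : IsMinOn J S v := by
    have hJle : J v ≤ J u₁ := by
      simp only [hJdef, hvdef, abs_abs]
      refine add_le_add_left (mul_le_mul_of_nonneg_left ?_ (by norm_num)) _
      refine Finset.sum_le_sum fun i _ => Finset.sum_le_sum fun j hj => ?_
      refine mul_le_mul_of_nonneg_left ?_
        (hwpos i j ((SimpleGraph.mem_neighborFinset G i j).1 hj)).le
      exact Real.rpow_le_rpow (abs_nonneg _) (abs_abs_sub_abs_le_abs_sub _ _) (by linarith)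
    exact isMinOn_iff.2 fun x hx => le_trans hJle (isMinOn_iff.1 hu₁min x hx)
  -- Lagrange multipliers
  have hΦd := aux_hasStrictFDerivAt_diag (fun i => m i * f i) hα v
  have hJd : HasStrictFDerivAt J
      ((1/2 : ℝ) • (∑ i, ∑ j ∈ G.neighborFinset i,
          (w i j * (p * |v i - v j| ^ (p - 2) * (v i - v j))) •
          ((ContinuousLinearMap.proj i : (V → ℝ) →L[ℝ] ℝ) - ContinuousLinearMap.proj j))
        + ∑ i, (m i * h i * (p * |v i| ^ (p - 2) * v i)) •
          (ContinuousLinearMap.proj i : (V → ℝ) →L[ℝ] ℝ)) v := by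
    exact ((aux_hasStrictFDerivAt_edge (fun i => G.neighborFinset i) w hp v).const_mul
      (1/2)).add (aux_hasStrictFDerivAt_diag (fun i => m i * h i) hp v)
  have hextr : IsLocalExtrOn J {x | Φ x = Φ v} v := by
    refine Or.inl ?_
    have : {x | Φ x = Φ v} = S := by rw [hvS]
    rw [this]
    exact hvmin.filter_mono inf_le_right
  obtain ⟨a, b, hab, heq⟩ := hextr.exists_multipliers_of_hasStrictFDerivAt_1d hΦd hJd
  -- pointwise scalar equations
  have hNsymm : ∀ i j : V, j ∈ G.neighborFinset i ↔ i ∈ G.neighborFinset j := by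
    intro i j
    rw [SimpleGraph.mem_neighborFinset, SimpleGraph.mem_neighborFinset, G.adj_comm]
  have hdanti : ∀ i j : V, w i j * (p * |v i - v j| ^ (p - 2) * (v i - v j))
      = -(w j i * (p * |v j - v i| ^ (p - 2) * (v j - v i))) := by
    intro i j
    rw [hwsymm i j, abs_sub_comm (v i) (v j)]
    ring
  have hkey : ∀ k, a * (m k * f k * (α * |v k| ^ (α - 2) * v k))
      + b * ((∑ j ∈ G.neighborFinset k, w k j * (p * |v k - v j| ^ (p - 2) * (v k - v j)))
        + m k * h k * (p * |v k| ^ (p - 2) * v k)) = 0 := by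
    intro k
    have h0 := DFunLike.congr_fun heq (Pi.single k 1)
    simp only [ContinuousLinearMap.add_apply, ContinuousLinearMap.smul_apply,
      ContinuousLinearMap.zero_apply, smul_eq_mul] at h0
    have e1 : ((∑ i, (m i * f i * (α * |v i| ^ (α - 2) * v i)) •
        (ContinuousLinearMap.proj i : (V → ℝ) →L[ℝ] ℝ) : (V → ℝ) →L[ℝ] ℝ)) (Pi.single k 1)
        = m k * f k * (α * |v k| ^ (α - 2) * v k) := aux_eval_diag _ k
    have e2 : ((∑ i, ∑ j ∈ G.neighborFinset i,
        (w i j * (p * |v i - v j| ^ (p - 2) * (v i - v j))) •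
        ((ContinuousLinearMap.proj i : (V → ℝ) →L[ℝ] ℝ) - ContinuousLinearMap.proj j)
          : (V → ℝ) →L[ℝ] ℝ)) (Pi.single k 1)
        = 2 * ∑ j ∈ G.neighborFinset k, w k j * (p * |v k - v j| ^ (p - 2) * (v k - v j)) :=
      aux_eval_edge _ hNsymm _ hdanti k
    have e3 : ((∑ i, (m i * h i * (p * |v i| ^ (p - 2) * v i)) •
        (ContinuousLinearMap.proj i : (V → ℝ) →L[ℝ] ℝ) : (V → ℝ) →L[ℝ] ℝ)) (Pi.single k 1)
        = m k * h k * (p * |v k| ^ (p - 2) * v k) := aux_eval_diag _ k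
    rw [e1, e2, e3] at h0
    linarith [h0]
  -- b ≠ 0
  have hb : b ≠ 0 := by
    intro hb0
    have ha : a ≠ 0 := by
      intro ha0
      exact hab (by simp [ha0, hb0, Prod.ext_iff])
    have hA0 : ∀ k, m k * f k * (α * |v k| ^ (α - 2) * v k) = 0 := by
      intro k
      have hk1 := hkey k
      rw [hb0, zero_mul, add_zero] at hk1
      exact (mul_eq_zero.1 hk1).resolve_left ha
    have hsum : ∑ k, m k * f k * (α * |v k| ^ (α - 2) * v k) * v k = 0 :=
      Finset.sum_eq_zero fun k _ => by rw [hA0 k, zero_mul]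
    have hterm : ∀ k, m k * f k * (α * |v k| ^ (α - 2) * v k) * v k
        = α * (m k * f k * |v k| ^ α) := by
      intro k
      rcases eq_or_lt_of_le (hvnn k) with h0 | hpos
      · rw [← h0]
        simp [Real.zero_rpow hα0]
      · have hne : v k ≠ 0 := ne_of_gt hpos
        rw [abs_of_pos hpos]
        have e1 : (v k) ^ (α - 2) * v k = (v k) ^ (α - 1) := by
          rw [← Real.rpow_add_one hne]; ring_nf
        have e2 : (v k) ^ (α - 1) * v k = (v k) ^ α := by
          rw [← Real.rpow_add_one hne]; ring_nf
        linear_combination (m k * f k * α * v k) * e1 + (m k * f k * α) * e2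
    rw [Finset.sum_congr rfl fun k _ => hterm k, ← Finset.mul_sum] at hsum
    have hΦv : ∑ k, m k * f k * |v k| ^ α = 1 := hvS
    rw [hΦv, mul_one] at hsum
    linarith
  -- v is strictly positive
  have hvpos : ∀ i, 0 < v i := by
    by_contra hcon
    push_neg at hcon
    obtain ⟨i₀, hi₀⟩ := hcon
    have hi₀0 : v i₀ = 0 := le_antisymm hi₀ (hvnn i₀)
    have hZ : ∀ i, i ∈ {j | v j = 0} → ∀ j, G.Adj i j → j ∈ {j | v j = 0} := by
      intro i hi j hadj
      have hvi : v i = 0 := hi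
      have hk1 := hkey i
      rw [hvi] at hk1
      simp only [abs_zero, mul_zero, add_zero, zero_add, zero_sub, abs_neg] at hk1
      have hsum0 : ∑ j ∈ G.neighborFinset i, w i j * (p * |v j| ^ (p - 2) * -(v j)) = 0 :=
        (mul_eq_zero.1 hk1).resolve_left hb
      have hnonpos : ∀ j ∈ G.neighborFinset i,
          w i j * (p * |v j| ^ (p - 2) * -(v j)) ≤ 0 := by
        intro j hj
        have hw := hwpos i j ((SimpleGraph.mem_neighborFinset G i j).1 hj)
        have h1 : 0 ≤ |v j| ^ (p - 2) := Real.rpow_nonneg (abs_nonneg _) _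
        have h2 : 0 ≤ v j := hvnn j
        have hnn : 0 ≤ w i j * p * (|v j| ^ (p - 2) * v j) :=
          mul_nonneg (mul_nonneg hw.le (by linarith)) (mul_nonneg h1 h2)
        nlinarith [hnn]
      have hterm0 := (Finset.sum_eq_zero_iff_of_nonpos hnonpos).1 hsum0 j
        ((SimpleGraph.mem_neighborFinset G i j).2 hadj)
      show v j = 0
      by_contra hvj0
      have hvj : 0 < v j := lt_of_le_of_ne (hvnn j) (Ne.symm hvj0)
      have hw := hwpos i j hadj
      have h1 : 0 < |v j| ^ (p - 2) := Real.rpow_pos_of_pos (abs_pos.2 hvj0) _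
      have hpos : 0 < w i j * p * (|v j| ^ (p - 2) * v j) :=
        mul_pos (mul_pos hw (by linarith)) (mul_pos h1 hvj)
      nlinarith [hpos]
    have hall : ∀ j, v j = 0 := fun j =>
      aux_walk hZ ((hconn.preconnected i₀ j).some) hi₀0
    have hΦ0 : Φ v = 0 := by
      simp only [hΦdef]
      exact Finset.sum_eq_zero fun k _ => by
        rw [hall k]
        simp [Real.zero_rpow hα0]
    rw [hvS] at hΦ0
    exact one_ne_zero hΦ0
  -- conclude
  refine ⟨-(a * α) / (b * p), v, hvpos, fun k => ?_⟩
  have hvk := hvpos k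
  have hvne : v k ≠ 0 := ne_of_gt hvk
  have hmk : m k ≠ 0 := (hm k).ne'
  have hp0 : p ≠ 0 := by linarith
  have eα : α * |v k| ^ (α - 2) * v k = α * v k ^ (α - 1) := by
    rw [abs_of_pos hvk, mul_assoc, ← Real.rpow_add_one hvne]; ring_nf
  have ep : p * |v k| ^ (p - 2) * v k = p * v k ^ (p - 1) := by
    rw [abs_of_pos hvk, mul_assoc, ← Real.rpow_add_one hvne]; ring_nf
  have hBk : (∑ j ∈ G.neighborFinset k, w k j * (p * |v k - v j| ^ (p - 2) * (v k - v j)))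
      = -p * (m k * pLap G w m p v k) := by
    simp only [pLap]
    rw [show m k * (1 / m k * ∑ j ∈ G.neighborFinset k,
        w k j * |v j - v k| ^ (p - 2) * (v j - v k))
      = ∑ j ∈ G.neighborFinset k, w k j * |v j - v k| ^ (p - 2) * (v j - v k) by
        field_simp]
    rw [Finset.mul_sum]
    refine Finset.sum_congr rfl fun j _ => ?_
    rw [abs_sub_comm (v k) (v j)]
    ring
  have hk2 := hkey k
  rw [eα, ep, hBk] at hk2
  rw [div_mul_eq_mul_div, div_mul_eq_mul_div, eq_div_iff (mul_ne_zero hb hp0)]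
  apply mul_left_cancel₀ hmk
  linear_combination hk2
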